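/- arXiv:1901.08949 — 2 statements merged into one kernel-verified Lean document; each statement's English description precedes it below -/
import Mathlib

section
/- For probability measures μ, ν on ℝ^d with finite second moments and a symmetric matrix Ω with 0 ⪯ Ω ⪯ I, the minimum over couplings π ∈ Π(μ,ν) of ∫ (x−y)^T Ω (x−y) dπ(x,y) equals W₂²((Ω^{1/2})_#μ, (Ω^{1/2})_#ν), the squared 2-Wasserstein distance between the pushforwards by the positive square root of Ω. -/
noncomputable section
open MeasureTheory

abbrev Ed (d : ℕ) := EuclideanSpace ℝ (Fin d)

def couplings {d : ℕ} (μ ν : Measure (Ed d)) : Set (Measure (Ed d × Ed d)) :=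
  {π | IsProbabilityMeasure π ∧ π.map Prod.fst = μ ∧ π.map Prod.snd = ν}

def transportCost {d : ℕ} (π : Measure (Ed d × Ed d)) : ℝ :=
  ∫ p, ‖p.1 - p.2‖ ^ 2 ∂π

/-- The positive semidefinite square root of a positive semidefinite matrix
(the definition `Matrix.PosSemidef.sqrt` of the older Mathlib, since removed). -/
def Matrix.PosSemidef.sqrt {n 𝕜 : Type*} [Fintype n] [DecidableEq n] [RCLike 𝕜]
    [PartialOrder 𝕜] [StarOrderedRing 𝕜]
    {A : Matrix n n 𝕜} (hA : A.PosSemidef) : Matrix n n 𝕜 :=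
  (hA.1.eigenvectorUnitary : Matrix n n 𝕜) *
    Matrix.diagonal (fun i => ((√(hA.1.eigenvalues i) : ℝ) : 𝕜)) *
  (star (hA.1.eigenvectorUnitary : Matrix n n 𝕜))

/-- Squared 2-Wasserstein distance. -/
def W2sq {d : ℕ} (μ ν : Measure (Ed d)) : ℝ :=
  sInf (transportCost '' couplings μ ν)

/-!
Writing `S = Ω^{1/2}`, the quadratic form `(x - y)ᵀ Ω (x - y)` is `‖S x - S y‖²`, so the
Mahalanobis cost of a coupling `π` of `μ, ν` is the Euclidean cost of its image under `S × S`,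
which couples `S_#μ, S_#ν`. Conversely every coupling `ρ` of `S_#μ, S_#ν` is such an image:
disintegrate `μ` and `ν` along `S` and glue the two conditional laws over `ρ`. Hence both infima
run over the same set of numbers.
-/

open ProbabilityTheory Matrix

namespace Matrix.PosSemidef

open scoped ComplexOrder

variable {n 𝕜 : Type*} [Fintype n] [DecidableEq n] [RCLike 𝕜]
  {A : Matrix n n 𝕜}

lemma conjTranspose_sqrt (hA : A.PosSemidef) : hA.sqrtᴴ = hA.sqrt := by
  simp only [sqrt, conjTranspose_mul, diagonal_conjTranspose, star_eq_conjTranspose,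
    conjTranspose_conjTranspose, Matrix.mul_assoc]
  congr 3
  funext i
  simp

lemma sqrt_mul_self (hA : A.PosSemidef) : hA.sqrt * hA.sqrt = A := by
  have hD : diagonal (fun i => ((√(hA.1.eigenvalues i) : ℝ) : 𝕜)) *
      diagonal (fun i => ((√(hA.1.eigenvalues i) : ℝ) : 𝕜)) =
      diagonal (RCLike.ofReal ∘ hA.1.eigenvalues) := by
    rw [diagonal_mul_diagonal]
    congr 1
    funext i
    simp only [Function.comp_apply]
    rw [← RCLike.ofReal_mul, Real.mul_self_sqrt (hA.eigenvalues_nonneg i)]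
  conv_rhs => rw [hA.1.spectral_theorem, Unitary.conjStarAlgAut_apply]
  simp only [sqrt, Matrix.mul_assoc]
  rw [← Matrix.mul_assoc (star _) _ (diagonal _ * _), Unitary.coe_star_mul_self, Matrix.one_mul,
    ← Matrix.mul_assoc (diagonal _) (diagonal _), hD]

lemma norm_toEuclideanLin_sqrt_sq {A : Matrix n n ℝ} (hA : A.PosSemidef)
    (x : EuclideanSpace ℝ n) :
    ‖toEuclideanLin hA.sqrt x‖ ^ 2 = x ⬝ᵥ A *ᵥ x := by
  rw [← real_inner_self_eq_norm_sq, EuclideanSpace.inner_eq_star_dotProduct]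
  simp only [toLpLin_apply, star_trivial]
  rw [dotProduct_mulVec, ← mulVec_transpose, ← conjTranspose_eq_transpose_of_trivial,
    hA.conjTranspose_sqrt, mulVec_mulVec, hA.sqrt_mul_self, dotProduct_comm]

end Matrix.PosSemidef

section ParallelComp

variable {α β γ δ : Type*} [MeasurableSpace α] [MeasurableSpace β] [MeasurableSpace γ]
  [MeasurableSpace δ]

lemma map_fst_parallelComp_comp (ρ : Measure (α × γ)) (κ : Kernel α β)
    [IsSFiniteKernel κ] (η : Kernel γ δ) [IsMarkovKernel η] :
    ((κ ∥ₖ η) ∘ₘ ρ).map Prod.fst = κ ∘ₘ ρ.map Prod.fst := by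
  ext s hs
  rw [Measure.map_apply measurable_fst hs, ← Set.prod_univ,
    Measure.bind_apply (hs.prod .univ) (Kernel.aemeasurable _),
    Measure.bind_apply hs (Kernel.aemeasurable _),
    lintegral_map (κ.measurable_coe hs) measurable_fst]
  simp [Kernel.parallelComp_apply_prod]

lemma map_snd_parallelComp_comp (ρ : Measure (α × γ)) (κ : Kernel α β)
    [IsMarkovKernel κ] (η : Kernel γ δ) [IsSFiniteKernel η] :
    ((κ ∥ₖ η) ∘ₘ ρ).map Prod.snd = η ∘ₘ ρ.map Prod.snd := by
  ext s hs
  rw [Measure.map_apply measurable_snd hs, ← Set.univ_prod,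
    Measure.bind_apply (MeasurableSet.univ.prod hs) (Kernel.aemeasurable _),
    Measure.bind_apply hs (Kernel.aemeasurable _),
    lintegral_map (η.measurable_coe hs) measurable_snd]
  simp [Kernel.parallelComp_apply_prod]

end ParallelComp

section Gluing

variable {X₁ X₂ Y₁ Y₂ : Type*}
  [MeasurableSpace X₁] [StandardBorelSpace X₁] [Nonempty X₁]
  [MeasurableSpace X₂] [StandardBorelSpace X₂] [Nonempty X₂]
  [MeasurableSpace Y₁] [StandardBorelSpace Y₁] [Nonempty Y₁]
  [MeasurableSpace Y₂] [StandardBorelSpace Y₂] [Nonempty Y₂]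

lemma ae_map_condDistrib_id_eq_dirac (μ : Measure X₁) [IsFiniteMeasure μ] {f : X₁ → Y₁}
    (hf : Measurable f) :
    ∀ᵐ y ∂μ.map f, (condDistrib id f μ y).map f = Measure.dirac y := by
  filter_upwards [condDistrib_comp f aemeasurable_id hf (μ := μ), condDistrib_self f (μ := μ)]
    with y hcomp hself
  rw [← Kernel.map_apply _ hf, ← hcomp, Function.comp_id, hself, Kernel.id_apply]

theorem exists_map_fst_map_snd_map_prodMap_eq (μ : Measure X₁) (ν : Measure X₂)
    [IsFiniteMeasure μ] [IsFiniteMeasure ν] {f : X₁ → Y₁} {g : X₂ → Y₂}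
    (hf : Measurable f) (hg : Measurable g) {ρ : Measure (Y₁ × Y₂)}
    (hρ₁ : ρ.map Prod.fst = μ.map f) (hρ₂ : ρ.map Prod.snd = ν.map g) :
    ∃ π : Measure (X₁ × X₂),
      π.map Prod.fst = μ ∧ π.map Prod.snd = ν ∧ π.map (Prod.map f g) = ρ := by
  set κ := condDistrib id f μ
  set η := condDistrib id g ν
  have hdirac : ∀ᵐ p ∂ρ, ((κ ∥ₖ η).map (Prod.map f g)) p = Kernel.id p := by
    have h₁ := ae_map_condDistrib_id_eq_dirac μ hf
    have h₂ := ae_map_condDistrib_id_eq_dirac ν hg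
    rw [← hρ₁] at h₁
    rw [← hρ₂] at h₂
    filter_upwards [ae_of_ae_map measurable_fst.aemeasurable h₁,
      ae_of_ae_map measurable_snd.aemeasurable h₂] with p hp₁ hp₂
    rw [Kernel.map_apply _ (hf.prodMap hg), Kernel.parallelComp_apply,
      ← Measure.map_prod_map _ _ hf hg, hp₁, hp₂, Measure.dirac_prod_dirac, Kernel.id_apply]
  refine ⟨(κ ∥ₖ η) ∘ₘ ρ, ?_, ?_, ?_⟩
  · rw [map_fst_parallelComp_comp, hρ₁, condDistrib_comp_map hf.aemeasurable aemeasurable_id,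
      Measure.map_id]
  · rw [map_snd_parallelComp_comp, hρ₂, condDistrib_comp_map hg.aemeasurable aemeasurable_id,
      Measure.map_id]
  · rw [Measure.map_comp _ _ (hf.prodMap hg), Measure.comp_congr hdirac, Measure.id_comp]

end Gluing

section Couplings

variable {d : ℕ}

lemma map_prodMap_mem_couplings {μ ν : Measure (Ed d)} {f : Ed d → Ed d} (hf : Measurable f)
    {π : Measure (Ed d × Ed d)} (hπ : π ∈ couplings μ ν) :
    π.map (Prod.map f f) ∈ couplings (μ.map f) (ν.map f) := by
  obtain ⟨hπ, hπ₁, hπ₂⟩ := hπ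
  refine ⟨Measure.isProbabilityMeasure_map (hf.prodMap hf).aemeasurable, ?_, ?_⟩
  · rw [Measure.map_map measurable_fst (hf.prodMap hf), Prod.map_fst',
      ← Measure.map_map hf measurable_fst, hπ₁]
  · rw [Measure.map_map measurable_snd (hf.prodMap hf), Prod.map_snd',
      ← Measure.map_map hf measurable_snd, hπ₂]

lemma image_map_prodMap_couplings {μ ν : Measure (Ed d)} {f : Ed d → Ed d} (hf : Measurable f) :
    (fun π => π.map (Prod.map f f)) '' couplings μ ν = couplings (μ.map f) (ν.map f) := by
  refine subset_antisymm (Set.image_subset_iff.2 fun π => map_prodMap_mem_couplings hf) ?_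
  rintro ρ ⟨hρ, hρ₁, hρ₂⟩
  have hμ : IsProbabilityMeasure μ := by
    rw [← Measure.isProbabilityMeasure_map_iff hf.aemeasurable, ← hρ₁]
    exact Measure.isProbabilityMeasure_map measurable_fst.aemeasurable
  have hν : IsProbabilityMeasure ν := by
    rw [← Measure.isProbabilityMeasure_map_iff hf.aemeasurable, ← hρ₂]
    exact Measure.isProbabilityMeasure_map measurable_snd.aemeasurable
  obtain ⟨π, hπ₁, hπ₂, hπρ⟩ :=
    exists_map_fst_map_snd_map_prodMap_eq μ ν hf hf hρ₁ hρ₂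
  refine ⟨π, ⟨?_, hπ₁, hπ₂⟩, hπρ⟩
  rwa [← Measure.isProbabilityMeasure_map_iff measurable_fst.aemeasurable, hπ₁]

lemma transportCost_map_prodMap {f : Ed d → Ed d} (hf : Measurable f)
    (π : Measure (Ed d × Ed d)) :
    transportCost (π.map (Prod.map f f)) = ∫ p, ‖f p.1 - f p.2‖ ^ 2 ∂π :=
  integral_map (hf.prodMap hf).aemeasurable (by fun_prop)

end Couplings

theorem min_mahalanobis_eq_W2sq_push_general {d : ℕ} (μ ν : Measure (Ed d))
    (Ω : Matrix (Fin d) (Fin d) ℝ) (hΩ : Ω.PosSemidef) :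
    sInf ((fun π : Measure (Ed d × Ed d) =>
        ∫ p, dotProduct (p.1 - p.2) (Ω.mulVec (p.1 - p.2)) ∂π) '' couplings μ ν) =
      W2sq (μ.map (Matrix.toEuclideanLin hΩ.sqrt)) (ν.map (Matrix.toEuclideanLin hΩ.sqrt)) := by
  set S := toEuclideanLin hΩ.sqrt with hSdef
  have hS : Measurable S := S.continuous_of_finiteDimensional.measurable
  have hcost : (fun π : Measure (Ed d × Ed d) =>
      ∫ p, dotProduct (p.1 - p.2) (Ω.mulVec (p.1 - p.2)) ∂π) =
      transportCost ∘ fun π => π.map (Prod.map S S) := by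
    funext π
    rw [Function.comp_apply, transportCost_map_prodMap hS]
    congr with p
    rw [← map_sub, hSdef, hΩ.norm_toEuclideanLin_sqrt_sq, WithLp.ofLp_sub]
  rw [hcost, Set.image_comp, image_map_prodMap_couplings hS, W2sq]

/-- For `μ, ν ∈ P₂(ℝ^d)` and symmetric `0 ⪯ Ω ⪯ I`, the minimum over couplings of
`∫ (x−y)ᵀ Ω (x−y) dπ` equals `W₂²((Ω^{1/2})_#μ, (Ω^{1/2})_#ν)`. -/
theorem min_mahalanobis_eq_W2sq_push {d : ℕ} (μ ν : Measure (Ed d))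
    [IsProbabilityMeasure μ] [IsProbabilityMeasure ν]
    (hμ : Integrable (fun x => ‖x‖ ^ 2) μ) (hν : Integrable (fun x => ‖x‖ ^ 2) ν)
    (Ω : Matrix (Fin d) (Fin d) ℝ) (hΩ : Ω.PosSemidef) (hΩI : (1 - Ω).PosSemidef) :
    sInf ((fun π : Measure (Ed d × Ed d) =>
        ∫ p, dotProduct (p.1 - p.2) (Ω.mulVec (p.1 - p.2)) ∂π) '' couplings μ ν) =
      W2sq (μ.map (Matrix.toEuclideanLin hΩ.sqrt)) (ν.map (Matrix.toEuclideanLin hΩ.sqrt)) :=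
  min_mahalanobis_eq_W2sq_push_general μ ν Ω hΩ
end
end

section
/- For any k ∈ {1,…,d} and μ, ν ∈ P₂(ℝ^d), the subspace robust Wasserstein distance is equivalent to the 2-Wasserstein distance: √(k/d) · W₂(μ,ν) ≤ S_k(μ,ν) ≤ W₂(μ,ν). -/
/-!
For every coupling `π`, the matrix `V_π` is positive semidefinite and its trace is the transport
cost of `π`. Its `k` largest eigenvalues therefore sum to at most the cost, and, by Chebyshev's sum
inequality, to at least `k / d` times the cost. Taking infima over the couplings gives
`(k / d) W₂² ≤ S_k² ≤ W₂²`.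
-/

noncomputable section
open MeasureTheory Matrix

/-- Second-order displacement matrix `V_π = ∫ (x−y)(x−y)ᵀ dπ`, entrywise. -/
def Vpi {d : ℕ} (π : Measure (Ed d × Ed d)) : Matrix (Fin d) (Fin d) ℝ :=
  Matrix.of fun i j => ∫ p, (p.1 i - p.2 i) * (p.1 j - p.2 j) ∂π

lemma Vpi_isHermitian {d : ℕ} (π : Measure (Ed d × Ed d)) : (Vpi π).IsHermitian := by
  unfold Matrix.IsHermitian
  ext i j
  simp [Vpi, Matrix.conjTranspose_apply, mul_comm]

/-- Eigenvalues in decreasing order: `eigDesc V h i` is the `(i+1)`-th largest eigenvalue. -/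
def eigDesc {d : ℕ} (V : Matrix (Fin d) (Fin d) ℝ) (h : V.IsHermitian) : Fin d → ℝ :=
  fun i => h.eigenvalues (Tuple.sort h.eigenvalues i.rev)

/-- Sum of the `k` largest eigenvalues. -/
def topEigSum {d : ℕ} (k : ℕ) (V : Matrix (Fin d) (Fin d) ℝ) (h : V.IsHermitian) : ℝ :=
  ∑ i ∈ Finset.univ.filter (fun i : Fin d => (i : ℕ) < k), eigDesc V h i

/-- Squared subspace robust Wasserstein distance:
`S_k²(μ,ν) = inf_{π ∈ Π(μ,ν)} Σ_{l=1}^k λ_l(V_π)`. -/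
def SRWsq {d : ℕ} (k : ℕ) (μ ν : Measure (Ed d)) : ℝ :=
  sInf ((fun π => topEigSum k (Vpi π) (Vpi_isHermitian π)) '' couplings μ ν)

open Finset in
theorem Antitone.mul_sum_le_mul_sum_filter_val_lt {d k : ℕ} {f : Fin d → ℝ} (hf : Antitone f)
    (hkd : k ≤ d) :
    (k : ℝ) * ∑ i, f i ≤ d * ∑ i ∈ univ.filter (fun i : Fin d => (i : ℕ) < k), f i := by
  -- Chebyshev's sum inequality against the antitone indicator of the first `k` indices.
  set g : Fin d → ℝ := fun i => if (i : ℕ) < k then 1 else 0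
  have hg : Antitone g := fun i j hij => by
    by_cases hj : (j : ℕ) < k
    · simp [g, hj, show (i : ℕ) < k from lt_of_le_of_lt hij hj]
    · by_cases hi : (i : ℕ) < k <;> simp [g, hi, hj]
  have hsum_g : ∑ i, g i = k := by
    simp [g, Fin.card_filter_val_lt, min_eq_right hkd]
  have hsum_fg : ∑ i, f i * g i = ∑ i ∈ univ.filter (fun i : Fin d => (i : ℕ) < k), f i := by
    simp [g, Finset.sum_filter]
  simpa [hsum_g, hsum_fg, mul_comm] using (hf.monovary hg).sum_mul_sum_le_card_mul_sum

theorem Real.sInf_image_le_sInf_image {α : Type*} {C : Set α} {f g : α → ℝ}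
    (hf : BddBelow (f '' C)) (hfg : ∀ c ∈ C, f c ≤ g c) : sInf (f '' C) ≤ sInf (g '' C) := by
  rcases C.eq_empty_or_nonempty with rfl | hC
  · simp
  refine le_csInf (hC.image g) ?_
  rintro _ ⟨c, hc, rfl⟩
  exact (csInf_le hf ⟨c, hc, rfl⟩).trans (hfg c hc)

theorem integrable_norm_sub_sq_of_map {E : Type*} [NormedAddCommGroup E] [MeasurableSpace E]
    [OpensMeasurableSpace E] [SecondCountableTopology E] {π : Measure (E × E)}
    (h₁ : Integrable (fun x => ‖x‖ ^ 2) (π.map Prod.fst))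
    (h₂ : Integrable (fun x => ‖x‖ ^ 2) (π.map Prod.snd)) :
    Integrable (fun p : E × E => ‖p.1 - p.2‖ ^ 2) π := by
  have hL2 : ∀ {ρ : Measure E}, Integrable (fun x => ‖x‖ ^ 2) ρ → MemLp id 2 ρ := fun h =>
    (memLp_two_iff_integrable_sq_norm aestronglyMeasurable_id).2 h
  have hsub := ((hL2 h₁).comp_of_map measurable_fst.aemeasurable).sub
    ((hL2 h₂).comp_of_map measurable_snd.aemeasurable)
  exact (memLp_two_iff_integrable_sq_norm hsub.1).1 hsub

section Spectrum

variable {d : ℕ} {V : Matrix (Fin d) (Fin d) ℝ}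

theorem eigDesc_antitone (h : V.IsHermitian) : Antitone (eigDesc V h) :=
  fun _ _ hij => Tuple.monotone_sort h.eigenvalues (Fin.rev_le_rev.mpr hij)

theorem sum_eigDesc (h : V.IsHermitian) : ∑ i, eigDesc V h i = V.trace := by
  rw [h.trace_eq_sum_eigenvalues, RCLike.ofReal_real_eq_id]
  exact Equiv.sum_comp (Fin.revPerm.trans (Tuple.sort h.eigenvalues)) h.eigenvalues

theorem eigDesc_nonneg (h : V.IsHermitian) (hV : V.PosSemidef) (i : Fin d) :
    0 ≤ eigDesc V h i :=
  hV.eigenvalues_nonneg _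

theorem topEigSum_nonneg (k : ℕ) (h : V.IsHermitian) (hV : V.PosSemidef) :
    0 ≤ topEigSum k V h :=
  Finset.sum_nonneg fun i _ => eigDesc_nonneg h hV i

theorem topEigSum_le_trace (k : ℕ) (h : V.IsHermitian) (hV : V.PosSemidef) :
    topEigSum k V h ≤ V.trace :=
  sum_eigDesc h ▸ Finset.sum_le_univ_sum_of_nonneg (eigDesc_nonneg h hV)

theorem div_mul_trace_le_topEigSum {k : ℕ} (h : V.IsHermitian) (hkd : k ≤ d) :
    (k / d : ℝ) * V.trace ≤ topEigSum k V h := by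
  rcases Nat.eq_zero_or_pos d with rfl | hd
  · simp [topEigSum]
  have := (eigDesc_antitone h).mul_sum_le_mul_sum_filter_val_lt hkd
  rw [sum_eigDesc] at this
  rw [div_mul_eq_mul_div, div_le_iff₀ (by exact_mod_cast hd), mul_comm _ (d : ℝ)]
  exact this

end Spectrum

section Displacement

variable {d : ℕ} {π : Measure (Ed d × Ed d)}

theorem integrable_coord_sub_mul_coord_sub
    (hc : Integrable (fun p : Ed d × Ed d => ‖p.1 - p.2‖ ^ 2) π) (i j : Fin d) :
    Integrable (fun p : Ed d × Ed d => (p.1 i - p.2 i) * (p.1 j - p.2 j)) π := by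
  have hL2 : MemLp (fun p : Ed d × Ed d => p.1 - p.2) 2 π :=
    (memLp_two_iff_integrable_sq_norm (by fun_prop)).2 hc
  have hcoord (l : Fin d) : MemLp (fun p : Ed d × Ed d => p.1 l - p.2 l) 2 π :=
    (EuclideanSpace.proj l : Ed d →L[ℝ] ℝ).comp_memLp' hL2
  exact (hcoord i).integrable_mul (hcoord j)

theorem dotProduct_Vpi_mulVec (hc : Integrable (fun p : Ed d × Ed d => ‖p.1 - p.2‖ ^ 2) π)
    (v : Fin d → ℝ) :
    v ⬝ᵥ (Vpi π *ᵥ v) = ∫ p, (∑ i, v i * (p.1 i - p.2 i)) ^ 2 ∂π := by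
  have hint (i j : Fin d) : Integrable
      (fun p : Ed d × Ed d => v i * (p.1 i - p.2 i) * (v j * (p.1 j - p.2 j))) π := by
    simpa only [mul_mul_mul_comm] using
      (integrable_coord_sub_mul_coord_sub hc i j).const_mul (v i * v j)
  simp_rw [sq, Finset.sum_mul_sum]
  rw [integral_finsetSum _ fun i _ => integrable_finsetSum _ fun j _ => hint i j]
  refine Finset.sum_congr rfl fun i _ => ?_
  rw [integral_finsetSum _ fun j _ => hint i j, mulVec, dotProduct, Finset.mul_sum]
  refine Finset.sum_congr rfl fun j _ => ?_
  simp only [Vpi, of_apply]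
  rw [← integral_mul_const, ← integral_const_mul]
  exact integral_congr_ae (Filter.Eventually.of_forall fun p => by ring)

theorem Vpi_posSemidef (hc : Integrable (fun p : Ed d × Ed d => ‖p.1 - p.2‖ ^ 2) π) :
    (Vpi π).PosSemidef :=
  .of_dotProduct_mulVec_nonneg (Vpi_isHermitian π) fun v => by
    simpa [dotProduct_Vpi_mulVec hc] using integral_nonneg fun p => sq_nonneg _

theorem trace_Vpi (hc : Integrable (fun p : Ed d × Ed d => ‖p.1 - p.2‖ ^ 2) π) :
    (Vpi π).trace = transportCost π := by
  simp_rw [transportCost, EuclideanSpace.real_norm_sq_eq, PiLp.sub_apply, sq]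
  rw [integral_finsetSum _ fun i _ => integrable_coord_sub_mul_coord_sub hc i i]
  rfl

end Displacement

section Couplings

variable {d : ℕ} {μ ν : Measure (Ed d)}

theorem integrable_cost_of_mem_couplings {π : Measure (Ed d × Ed d)} (hπ : π ∈ couplings μ ν)
    (hμ : Integrable (fun x => ‖x‖ ^ 2) μ) (hν : Integrable (fun x => ‖x‖ ^ 2) ν) :
    Integrable (fun p : Ed d × Ed d => ‖p.1 - p.2‖ ^ 2) π :=
  integrable_norm_sub_sq_of_map (hπ.2.1 ▸ hμ) (hπ.2.2 ▸ hν)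

theorem SRWsq_le_W2sq (k : ℕ) (hμ : Integrable (fun x => ‖x‖ ^ 2) μ)
    (hν : Integrable (fun x => ‖x‖ ^ 2) ν) : SRWsq k μ ν ≤ W2sq μ ν := by
  refine Real.sInf_image_le_sInf_image ⟨0, ?_⟩ fun π hπ => ?_
  · rintro _ ⟨π, hπ, rfl⟩
    exact topEigSum_nonneg k _ (Vpi_posSemidef (integrable_cost_of_mem_couplings hπ hμ hν))
  · have hc := integrable_cost_of_mem_couplings hπ hμ hν
    exact trace_Vpi hc ▸ topEigSum_le_trace k _ (Vpi_posSemidef hc)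

theorem div_mul_W2sq_le_SRWsq {k : ℕ} (hkd : k ≤ d) (hμ : Integrable (fun x => ‖x‖ ^ 2) μ)
    (hν : Integrable (fun x => ‖x‖ ^ 2) ν) : (k / d : ℝ) * W2sq μ ν ≤ SRWsq k μ ν := by
  have hratio_nonneg : (0 : ℝ) ≤ k / d := by positivity
  rw [W2sq, ← smul_eq_mul, ← Real.sInf_smul_of_nonneg hratio_nonneg, ← Set.image_smul,
    Set.image_image]
  refine Real.sInf_image_le_sInf_image ⟨0, ?_⟩ fun π hπ => ?_
  · rintro _ ⟨π, -, rfl⟩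
    exact smul_nonneg hratio_nonneg (integral_nonneg fun p => by positivity)
  · have hc := integrable_cost_of_mem_couplings hπ hμ hν
    exact trace_Vpi hc ▸ div_mul_trace_le_topEigSum (Vpi_isHermitian π) hkd

end Couplings

theorem SRW_equiv_W2_general {d : ℕ} (k : ℕ) (hkd : k ≤ d)
    (μ ν : Measure (Ed d))
    (hμ : Integrable (fun x => ‖x‖ ^ 2) μ) (hν : Integrable (fun x => ‖x‖ ^ 2) ν) :
    Real.sqrt ((k : ℝ) / d) * Real.sqrt (W2sq μ ν) ≤ Real.sqrt (SRWsq k μ ν) ∧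
      Real.sqrt (SRWsq k μ ν) ≤ Real.sqrt (W2sq μ ν) := by
  refine ⟨?_, Real.sqrt_le_sqrt (SRWsq_le_W2sq k hμ hν)⟩
  rw [← Real.sqrt_mul (by positivity)]
  exact Real.sqrt_le_sqrt (div_mul_W2sq_le_SRWsq hkd hμ hν)

/-- Metric equivalence: `√(k/d)·W₂(μ,ν) ≤ S_k(μ,ν) ≤ W₂(μ,ν)`. -/
theorem SRW_equiv_W2 {d : ℕ} (k : ℕ) (hk : 1 ≤ k) (hkd : k ≤ d)
    (μ ν : Measure (Ed d)) [IsProbabilityMeasure μ] [IsProbabilityMeasure ν]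
    (hμ : Integrable (fun x => ‖x‖ ^ 2) μ) (hν : Integrable (fun x => ‖x‖ ^ 2) ν) :
    Real.sqrt ((k : ℝ) / d) * Real.sqrt (W2sq μ ν) ≤ Real.sqrt (SRWsq k μ ν) ∧
      Real.sqrt (SRWsq k μ ν) ≤ Real.sqrt (W2sq μ ν) :=
  SRW_equiv_W2_general k hkd μ ν hμ hν
end
end
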